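/- arXiv:1901.01191 — 2 statements merged into one kernel-verified Lean document; each statement's English description precedes it below -/
import Mathlib

section
/- For |i−j| > 1, the matrices ρ(σ_i) and ρ(σ_j) commute: ρ(σ_i)·ρ(σ_j) = ρ(σ_j)·ρ(σ_i). -/
open LaurentPolynomial Matrix

/-- The variable `a` in `ℤ[a^{±1}]`. -/
noncomputable def a : LaurentPolynomial ℤ := T 1

/-- The matrix `ρ(σ_i)` of size `n+2`, for `i : Fin (n+1)` (0-indexed; `i` corresponds
to the generator `σ_{i+1}` in the 1-indexed notation of the paper): the identity matrix
except that row `i+1` (0-indexed `i.succ`) has entry `a` in column `i`, entry `-a` in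
column `i+1`, and entry `1` in column `i+2` (when it exists). -/
noncomputable def ρσ (n : ℕ) (i : Fin (n+1)) :
    Matrix (Fin (n+2)) (Fin (n+2)) (LaurentPolynomial ℤ) :=
  fun k l => if k = i.succ then
      (if l = i.castSucc then a else if l = i.succ then -a
        else if (l : ℕ) = (i : ℕ) + 2 then 1 else 0)
    else if k = l then 1 else 0

/-- The deviation of `ρσ n i` from the identity matrix. -/
noncomputable def Eσ (n : ℕ) (i : Fin (n+1)) :
    Matrix (Fin (n+2)) (Fin (n+2)) (LaurentPolynomial ℤ) :=
  fun k l => if k = i.succ then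
      (if l = i.castSucc then a else if l = i.succ then -a - 1
        else if (l : ℕ) = (i : ℕ) + 2 then 1 else 0)
    else 0

lemma rho_eq (n : ℕ) (i : Fin (n+1)) : ρσ n i = 1 + Eσ n i := by
  ext k l
  simp only [ρσ, Eσ, Matrix.add_apply, Matrix.one_apply]
  split_ifs <;> simp_all [Fin.ext_iff]

lemma E_mul_E (n : ℕ) (i j : Fin (n+1))
    (h : (i : ℕ) + 1 < (j : ℕ) ∨ (j : ℕ) + 1 < (i : ℕ)) :
    Eσ n i * Eσ n j = 0 := by
  ext k l
  simp only [Matrix.mul_apply, Eσ, Matrix.zero_apply]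
  rw [Finset.sum_eq_single j.succ]
  · have h1 : (j.succ : Fin (n+2)) ≠ i.castSucc := by
      simp [Fin.ext_iff]; omega
    have h2 : (j.succ : Fin (n+2)) ≠ i.succ := by
      simp [Fin.ext_iff]; omega
    have h3 : ((j.succ : Fin (n+2)) : ℕ) ≠ (i : ℕ) + 2 := by
      simp; omega
    rw [if_neg h1, if_neg h2, if_neg h3]
    simp
  · intro m _ hm
    simp [hm]
  · simp

/-- For `|i - j| > 1`, the matrices `ρ(σ_i)` and `ρ(σ_j)` commute. -/
theorem rho_sigma_commute (n : ℕ) (i j : Fin (n+1))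
    (h : (i : ℕ) + 1 < (j : ℕ) ∨ (j : ℕ) + 1 < (i : ℕ)) :
    ρσ n i * ρσ n j = ρσ n j * ρσ n i := by
  rw [rho_eq, rho_eq]
  have hij := E_mul_E n i j h
  have hji := E_mul_E n j i h.symm
  rw [add_mul, one_mul, mul_add, mul_one, mul_add, mul_one, add_mul, one_mul, hij, hji]
end

section
/- The matrices ρ(σ_i) satisfy the braid relation: ρ(σ_i)·ρ(σ_{i+1})·ρ(σ_i) = ρ(σ_{i+1})·ρ(σ_i)·ρ(σ_{i+1}) for all 1 ≤ i ≤ n−2. -/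
set_option maxHeartbeats 1000000


open LaurentPolynomial Matrix

lemma mul_row (m : ℕ) (j : Fin (m+1))
    (M : Matrix (Fin (m+2)) (Fin (m+2)) (LaurentPolynomial ℤ)) (k l : Fin (m+2)) :
    (ρσ m j * M) k l = if k = j.succ then
      a * M j.castSucc l - a * M j.succ l +
        (if h : (j:ℕ) < m then M ⟨(j:ℕ)+2, by omega⟩ l else 0)
    else M k l := by
  rw [Matrix.mul_apply]
  by_cases hk : k = j.succ
  · subst hk
    simp only [ρσ, eq_self_iff_true, if_true]
    have key : ∀ x : Fin (m+2),
        (if x = j.castSucc then a else if x = j.succ then -a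
          else if (x : ℕ) = (j : ℕ) + 2 then (1 : LaurentPolynomial ℤ) else 0) * M x l
        = (if x = j.castSucc then a * M j.castSucc l else 0) +
          (if x = j.succ then -a * M j.succ l else 0) +
          (if (x : ℕ) = (j : ℕ) + 2 then M x l else 0) := by
      intro x
      by_cases h1 : x = j.castSucc
      · subst h1
        have h2 : ¬ (j.castSucc = j.succ) := by simp [Fin.ext_iff]
        have h3 : ¬ ((j.castSucc : ℕ) = (j : ℕ) + 2) := by simp
        simp [h2, h3]
      · by_cases h2 : x = j.succ
        · subst h2
          have h3 : ¬ ((j.succ : ℕ) = (j : ℕ) + 2) := by simp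
          simp [h1, h3]
        · simp only [if_neg h1, if_neg h2, zero_add]
          split_ifs <;> simp
    rw [Finset.sum_congr rfl fun x _ => key x]
    rw [Finset.sum_add_distrib, Finset.sum_add_distrib,
      Finset.sum_ite_eq' _ j.castSucc, Finset.sum_ite_eq' _ j.succ]
    simp only [Finset.mem_univ, if_true]
    split_ifs with h
    · have hrw : ∀ x : Fin (m+2), ((x : ℕ) = (j : ℕ) + 2) ↔ x = ⟨(j:ℕ)+2, by omega⟩ := by
        intro x; simp [Fin.ext_iff]
      simp only [hrw]
      rw [Finset.sum_ite_eq' _ (⟨(j:ℕ)+2, by omega⟩ : Fin (m+2))]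
      simp; ring
    · have hno : ∀ x : Fin (m+2), ¬ ((x : ℕ) = (j : ℕ) + 2) := by
        intro x hx; have := x.isLt; have := j.isLt; omega
      simp only [hno, if_false, Finset.sum_const_zero]
      ring
  · simp only [ρσ, if_neg hk]
    simp only [ite_mul, one_mul, zero_mul, Finset.sum_ite_eq, Finset.mem_univ, if_true]


/-- The braid relation `ρ(σ_i) ρ(σ_{i+1}) ρ(σ_i) = ρ(σ_{i+1}) ρ(σ_i) ρ(σ_{i+1})`,
for consecutive generators of a braid group on at least 3 strands (matrix size `n+3`). -/
theorem rho_sigma_braid (n : ℕ) (i : Fin (n+1)) :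
    ρσ (n+1) i.castSucc * ρσ (n+1) i.succ * ρσ (n+1) i.castSucc =
      ρσ (n+1) i.succ * ρσ (n+1) i.castSucc * ρσ (n+1) i.succ := by
  refine Matrix.ext fun k l => ?_
  rw [mul_assoc, mul_assoc]
  simp only [mul_row]
  by_cases hk1 : k = (i.castSucc).succ
  · subst hk1
    simp only [if_pos rfl]
    have hi1 : ((i.castSucc : Fin (n+2)) : ℕ) < n + 1 := by simpa using i.isLt
    simp only [dif_pos hi1]
    simp only [ρσ, Fin.ext_iff, Fin.coe_castSucc, Fin.val_succ]
    by_cases hi2 : (i : ℕ) + 1 < n + 1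
    · simp only [dif_pos hi2]
      simp only [left_eq_add, OfNat.ofNat_ne_zero, if_false, add_right_inj,
        Nat.add_right_cancel_iff, if_pos rfl]
      norm_num
      split_ifs <;> first | rfl | (exfalso; omega) | ring1
    · simp only [dif_neg hi2]
      simp only [left_eq_add, OfNat.ofNat_ne_zero, if_false, add_right_inj,
        Nat.add_right_cancel_iff, if_pos rfl]
      norm_num
      split_ifs <;> first | rfl | (exfalso; omega) | ring1
  · by_cases hk2 : k = (i.succ).succ
    · subst hk2
      have hne : ¬ ((i.succ).succ = (i.castSucc).succ) := by simp [Fin.ext_iff]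
      simp only [if_neg hne, if_pos rfl]
      have hi1 : ((i.castSucc : Fin (n+2)) : ℕ) < n + 1 := by simpa using i.isLt
      simp only [dif_pos hi1]
      simp only [ρσ, Fin.ext_iff, Fin.coe_castSucc, Fin.val_succ]
      by_cases hi2 : (i : ℕ) + 1 < n + 1
      · simp only [dif_pos hi2]
        simp only [left_eq_add, OfNat.ofNat_ne_zero, if_false, add_right_inj,
          Nat.add_right_cancel_iff, if_pos rfl]
        norm_num
        split_ifs <;> first | rfl | (exfalso; omega) | ring1
      · simp only [dif_neg hi2]
        simp only [left_eq_add, OfNat.ofNat_ne_zero, if_false, add_right_inj,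
          Nat.add_right_cancel_iff, if_pos rfl]
        norm_num
        split_ifs <;> first | rfl | (exfalso; omega) | ring1
    · simp only [if_neg hk1, if_neg hk2, ρσ]
end
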